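/- For every k ≥ 1 and every cost vector s ∈ [0,∞)^k, the adversary bounds of the k-bit AND and OR functions with costs s satisfy ADV_s(AND_k) = ADV±_s(AND_k) = √(Σ_{j=1}^k s_j²) and ADV_s(OR_k) = ADV±_s(OR_k) = √(Σ_{j=1}^k s_j²), where AND_k(x) = 1 iff all x_j = 1 and OR_k(x) = 1 iff some x_j = 1. -/
import Mathlib


noncomputable section

/-- Operator (spectral) norm of a real matrix. -/
def opNorm {m n : Type} [Fintype m] [Fintype n] [DecidableEq n] (M : Matrix m n ℝ) : ℝ :=
  ‖LinearMap.toContinuousLinearMap (Matrix.toEuclideanLin M)‖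

/-- The general adversary bound with costs `s` of `f : {0,1}^ι → {0,1}`. -/
def ADVpm {ι : Type} [Fintype ι] [DecidableEq ι] (s : ι → ℝ) (f : (ι → Bool) → Bool) : ℝ :=
  sSup { r : ℝ | ∃ Γ : Matrix (ι → Bool) (ι → Bool) ℝ, Γ.IsSymm ∧
    (∀ x y, f x = f y → Γ x y = 0) ∧
    (∀ j : ι, opNorm (Matrix.of fun x y => if x j ≠ y j then Γ x y else 0) ≤ s j) ∧
    r = opNorm Γ }

/-- The nonnegative-weight adversary bound with costs `s`. -/
def ADVnn {ι : Type} [Fintype ι] [DecidableEq ι] (s : ι → ℝ) (f : (ι → Bool) → Bool) : ℝ :=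
  sSup { r : ℝ | ∃ Γ : Matrix (ι → Bool) (ι → Bool) ℝ, Γ.IsSymm ∧
    (∀ x y, 0 ≤ Γ x y) ∧
    (∀ x y, f x = f y → Γ x y = 0) ∧
    (∀ j : ι, opNorm (Matrix.of fun x y => if x j ≠ y j then Γ x y else 0) ≤ s j) ∧
    r = opNorm Γ }

end


noncomputable section
set_option linter.unusedSectionVars false

def Evec {X : Type} [DecidableEq X] (a : X) (v : X → ℝ) : Matrix X X ℝ :=
  Matrix.of fun x y => if x = a then v y else if y = a then v x else 0

section EvecLemmas
variable {X : Type} [Fintype X] [DecidableEq X]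


lemma evec_mulVec (a : X) (v u : X → ℝ) (x : X) :
    (Evec a v).mulVec u x = if x = a then ∑ y, v y * u y else v x * u a := by
  by_cases hx : x = a
  · subst hx; simp [Evec, Matrix.mulVec, dotProduct]
  · simp only [Evec, Matrix.mulVec, dotProduct, Matrix.of_apply, hx, if_false, ite_mul,
      zero_mul]
    rw [Finset.sum_ite_eq' Finset.univ a (fun y => v x * u y)]
    simp [mul_comm]

lemma evec_isSymm (a : X) (v : X → ℝ) : (Evec a v).IsSymm := by
  ext x y
  by_cases hx : x = a <;> by_cases hy : y = a <;>
    simp [Evec, Matrix.transpose_apply, hx, hy]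

lemma evec_opNorm (a : X) (v : X → ℝ) (hva : v a = 0) :
    opNorm (Evec a v) = Real.sqrt (∑ y, v y ^ 2) := by
  set L := LinearMap.toContinuousLinearMap (Matrix.toEuclideanLin (Evec a v)) with hL
  have hLapp : ∀ u : EuclideanSpace ℝ X, ∀ x : X,
      (L u) x = if x = a then ∑ y, v y * u y else v x * u a := by
    intro u x
    have : (L u) x = (Evec a v).mulVec (fun y => u y) x := rfl
    rw [this, evec_mulVec]
  have hNnn : (0:ℝ) ≤ ∑ y, v y ^ 2 := Finset.sum_nonneg fun _ _ => sq_nonneg _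
  apply le_antisymm
  · apply ContinuousLinearMap.opNorm_le_bound _ (Real.sqrt_nonneg _)
    intro u
    have hnorm2 : ‖L u‖ ^ 2 ≤ (∑ y, v y ^ 2) * ‖u‖ ^ 2 := by
      have h1 : ‖L u‖ ^ 2 = ∑ x, ((L u) x) ^ 2 := by
        rw [EuclideanSpace.norm_eq, Real.sq_sqrt (Finset.sum_nonneg fun _ _ => sq_nonneg _)]
        simp [sq_abs]
      have h2 : ‖u‖ ^ 2 = ∑ x, (u x) ^ 2 := by
        rw [EuclideanSpace.norm_eq, Real.sq_sqrt (Finset.sum_nonneg fun _ _ => sq_nonneg _)]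
        simp [sq_abs]
      rw [h1, h2]
      rw [← Finset.add_sum_erase _ _ (Finset.mem_univ a)]
      have ha : ((L u) a) ^ 2 = (∑ y ∈ Finset.univ.erase a, v y * u y) ^ 2 := by
        rw [hLapp u a, if_pos rfl, ← Finset.add_sum_erase _ _ (Finset.mem_univ a), hva]
        ring_nf
      have hb : ∀ x ∈ Finset.univ.erase a, ((L u) x) ^ 2 = v x ^ 2 * u a ^ 2 := by
        intro x hx
        rw [hLapp u x, if_neg (Finset.ne_of_mem_erase hx)]; ring
      rw [ha, Finset.sum_congr rfl hb]
      have hcs := Finset.sum_mul_sq_le_sq_mul_sq (Finset.univ.erase a) v u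
      have hV : ∑ y ∈ Finset.univ.erase a, v y ^ 2 ≤ ∑ y, v y ^ 2 :=
        Finset.sum_le_sum_of_subset_of_nonneg (Finset.subset_univ _)
          (fun _ _ _ => sq_nonneg _)
      have hU : ∑ x, u x ^ 2 = (∑ x ∈ Finset.univ.erase a, u x ^ 2) + u a ^ 2 := by
        rw [← Finset.add_sum_erase _ _ (Finset.mem_univ a)]; ring
      calc (∑ y ∈ Finset.univ.erase a, v y * u y) ^ 2
            + ∑ x ∈ Finset.univ.erase a, v x ^ 2 * u a ^ 2
          ≤ (∑ y ∈ Finset.univ.erase a, v y ^ 2) * (∑ y ∈ Finset.univ.erase a, u y ^ 2)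
            + (∑ x ∈ Finset.univ.erase a, v x ^ 2) * u a ^ 2 := by
            rw [← Finset.sum_mul]; exact add_le_add hcs le_rfl
        _ = (∑ y ∈ Finset.univ.erase a, v y ^ 2) * ((∑ y ∈ Finset.univ.erase a, u y ^ 2) + u a ^ 2) := by ring
        _ ≤ (∑ y, v y ^ 2) * ((∑ y ∈ Finset.univ.erase a, u y ^ 2) + u a ^ 2) := by
            apply mul_le_mul_of_nonneg_right hV
            positivity
        _ = (∑ y, v y ^ 2) * ∑ x, u x ^ 2 := by rw [hU]
    calc ‖L u‖ = Real.sqrt (‖L u‖ ^ 2) := by rw [Real.sqrt_sq (norm_nonneg _)]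
      _ ≤ Real.sqrt ((∑ y, v y ^ 2) * ‖u‖ ^ 2) := Real.sqrt_le_sqrt hnorm2
      _ = Real.sqrt (∑ y, v y ^ 2) * ‖u‖ := by
          rw [Real.sqrt_mul hNnn, Real.sqrt_sq (norm_nonneg _)]
  · have hu : ‖L (EuclideanSpace.single a (1:ℝ))‖ = Real.sqrt (∑ y, v y ^ 2) := by
      rw [EuclideanSpace.norm_eq]
      congr 1
      apply Finset.sum_congr rfl
      intro x _
      rw [hLapp]; simp only [EuclideanSpace.single_apply]
      have hsum : (∑ y, v y * (if y = a then (1:ℝ) else 0)) = v a := by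
        simp [mul_ite, Finset.sum_ite_eq' Finset.univ a v]
      by_cases hx : x = a
      · rw [if_pos hx, hsum, hva, hx, hva]; simp
      · rw [if_neg hx]; simp [sq_abs]
    calc Real.sqrt (∑ y, v y ^ 2) = ‖L (EuclideanSpace.single a (1:ℝ))‖ := hu.symm
      _ ≤ ‖L‖ * ‖EuclideanSpace.single a (1:ℝ)‖ := L.le_opNorm _
      _ = ‖L‖ := by rw [EuclideanSpace.norm_single, norm_one, mul_one]

end EvecLemmas
lemma evec_hadamard {ι : Type} [Fintype ι] [DecidableEq ι] (a : ι → Bool)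
    (v : (ι → Bool) → ℝ) (j : ι) :
    (Matrix.of fun x y => if x j ≠ y j then Evec a v x y else 0)
      = Evec a (fun y => if y j ≠ a j then v y else 0) := by
  ext x y
  by_cases hx : x = a <;> by_cases hy : y = a
  · simp [Evec, hx, hy]
  · simp [Evec, hx, hy, ne_comm]
  · simp [Evec, hx, hy]
  · simp [Evec, hx, hy]

lemma adv_upper {ι : Type} [Fintype ι] [DecidableEq ι] (a : ι → Bool)
    (f : (ι → Bool) → Bool)
    (hf : ∀ x y, f x = f y ↔ (x = a ↔ y = a)) (s : ι → ℝ)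
    (Γ : Matrix (ι → Bool) (ι → Bool) ℝ) (hsymm : Γ.IsSymm)
    (hzero : ∀ x y, f x = f y → Γ x y = 0)
    (hcon : ∀ j : ι, opNorm (Matrix.of fun x y => if x j ≠ y j then Γ x y else 0) ≤ s j) :
    opNorm Γ ≤ Real.sqrt (∑ j, s j ^ 2) := by
  set w : (ι → Bool) → ℝ := Γ a with hw
  have hwa : w a = 0 := hzero a a rfl
  have hΓ : Γ = Evec a w := by
    ext x y
    by_cases hx : x = a
    · rw [hx]; simp [Evec, hw]
    · by_cases hy : y = a
      · rw [hy]
        simp only [Evec, Matrix.of_apply, hx, if_false, if_true]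
        exact (hsymm.apply x a).symm
      · simp only [Evec, Matrix.of_apply, hx, hy, if_false]
        exact hzero x y ((hf x y).mpr (iff_of_false hx hy))
  have hconj : ∀ j, ∑ y, (if y j ≠ a j then w y else 0) ^ 2 ≤ s j ^ 2 := by
    intro j
    have h := hcon j
    rw [hΓ, evec_hadamard] at h
    rw [evec_opNorm a _ (by simp)] at h
    have h0 : (0:ℝ) ≤ ∑ y, (if y j ≠ a j then w y else 0) ^ 2 :=
      Finset.sum_nonneg fun _ _ => sq_nonneg _
    calc ∑ y, (if y j ≠ a j then w y else 0) ^ 2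
        = Real.sqrt (∑ y, (if y j ≠ a j then w y else 0) ^ 2) ^ 2 := (Real.sq_sqrt h0).symm
      _ ≤ s j ^ 2 := pow_le_pow_left₀ (Real.sqrt_nonneg _) h 2
  rw [hΓ, evec_opNorm a w hwa]
  apply Real.sqrt_le_sqrt
  calc ∑ y, w y ^ 2 ≤ ∑ y, ∑ j, (if y j ≠ a j then w y else 0) ^ 2 := by
        apply Finset.sum_le_sum
        intro y _
        by_cases hy : y = a
        · rw [hy, hwa]
          have hnn : (0:ℝ) ≤ ∑ j : ι, (if a j ≠ a j then w a else 0) ^ 2 :=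
            Finset.sum_nonneg fun j _ => sq_nonneg _
          simpa using hnn
        · obtain ⟨j0, hj0⟩ : ∃ j, y j ≠ a j := by
            by_contra h; push_neg at h; exact hy (funext h)
          have heq : w y ^ 2 = (if y j0 ≠ a j0 then w y else 0) ^ 2 := by rw [if_pos hj0]
          rw [heq]
          exact Finset.single_le_sum (f := fun j => (if y j ≠ a j then w y else 0) ^ 2)
            (fun i _ => sq_nonneg _) (Finset.mem_univ j0)
    _ = ∑ j, ∑ y, (if y j ≠ a j then w y else 0) ^ 2 := Finset.sum_comm
    _ ≤ ∑ j, s j ^ 2 := Finset.sum_le_sum fun j _ => hconj j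

lemma adv_witness {ι : Type} [Fintype ι] [DecidableEq ι] (a : ι → Bool)
    (f : (ι → Bool) → Bool)
    (hf : ∀ x y, f x = f y ↔ (x = a ↔ y = a)) (s : ι → ℝ) (hs : ∀ j, 0 ≤ s j) :
    ∃ Γ : Matrix (ι → Bool) (ι → Bool) ℝ, Γ.IsSymm ∧
      (∀ x y, 0 ≤ Γ x y) ∧
      (∀ x y, f x = f y → Γ x y = 0) ∧
      (∀ j : ι, opNorm (Matrix.of fun x y => if x j ≠ y j then Γ x y else 0) ≤ s j) ∧
      Real.sqrt (∑ j, s j ^ 2) = opNorm Γ := by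
  set flip : ι → (ι → Bool) := fun j => Function.update a j (!(a j)) with hflip
  have hflipj : ∀ j, flip j j = !(a j) := fun j => Function.update_self j _ a
  have hflipne : ∀ i j, i ≠ j → flip j i = a i := fun i j h => Function.update_of_ne h _ a
  have hflip_ne_a : ∀ j, flip j ≠ a := by
    intro j h
    have h2 := congrFun h j
    rw [hflipj] at h2
    exact Bool.not_ne_self (a j) h2
  have hinj : ∀ i j, flip i = flip j → i = j := by
    intro i j h
    by_contra hij
    have h1 := congrFun h i
    rw [hflipj, hflipne i j hij] at h1
    exact Bool.not_ne_self (a i) h1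
  set v : (ι → Bool) → ℝ := fun y => ∑ j, if y = flip j then s j else 0 with hv
  have hva : v a = 0 := Finset.sum_eq_zero fun j _ => if_neg fun h => hflip_ne_a j h.symm
  have hvflip : ∀ j, v (flip j) = s j := by
    intro j
    have hcg : ∀ i, (if flip j = flip i then s i else 0) = if j = i then s i else 0 := by
      intro i
      by_cases h : j = i
      · rw [h]; simp
      · rw [if_neg h, if_neg fun hh => h (hinj j i hh)]
    show (∑ i, if flip j = flip i then s i else 0) = s j
    simp only [hcg]
    rw [Finset.sum_ite_eq Finset.univ j s]
    simp
  have hvzero : ∀ y, (∀ j, y ≠ flip j) → v y = 0 := fun y h =>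
    Finset.sum_eq_zero fun j _ => if_neg (h j)
  have hvnn : ∀ y, 0 ≤ v y := fun y => Finset.sum_nonneg fun j _ => by
    by_cases h : y = flip j
    · rw [if_pos h]; exact hs j
    · rw [if_neg h]
  have hsq : ∀ y, v y ^ 2 = ∑ j, if y = flip j then s j ^ 2 else 0 := by
    intro y
    by_cases hy : ∃ j, y = flip j
    · obtain ⟨j, rfl⟩ := hy
      rw [hvflip]
      have hcg : ∀ i, (if flip j = flip i then s i ^ 2 else 0) = if j = i then s i ^ 2 else 0 := by
        intro i
        by_cases h : j = i
        · rw [h]; simp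
        · rw [if_neg h, if_neg fun hh => h (hinj j i hh)]
      simp only [hcg]
      rw [Finset.sum_ite_eq Finset.univ j (fun i => s i ^ 2)]
      simp
    · push_neg at hy
      rw [hvzero y hy, Finset.sum_eq_zero fun j _ => if_neg (hy j)]
      ring
  have hsumsq : ∑ y, v y ^ 2 = ∑ j, s j ^ 2 := by
    calc ∑ y, v y ^ 2 = ∑ y, ∑ j, if y = flip j then s j ^ 2 else 0 :=
          Finset.sum_congr rfl fun y _ => hsq y
      _ = ∑ j, ∑ y, if y = flip j then s j ^ 2 else 0 := Finset.sum_comm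
      _ = ∑ j, s j ^ 2 := Finset.sum_congr rfl fun j _ => by
            rw [Finset.sum_ite_eq' Finset.univ (flip j) (fun _ => s j ^ 2)]
            simp
  have hvj : ∀ j y, (if y j ≠ a j then v y else 0) = if y = flip j then s j else 0 := by
    intro j y
    by_cases h1 : y = flip j
    · rw [h1, if_pos (by rw [hflipj]; exact Bool.not_ne_self (a j)), hvflip, if_pos rfl]
    · rw [if_neg h1]
      by_cases h2 : y j ≠ a j
      · rw [if_pos h2]
        apply hvzero
        intro i hi
        by_cases hij : i = j
        · exact h1 (hij ▸ hi)
        · have : flip i j = a j := hflipne j i fun hh => hij hh.symm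
          rw [hi, this] at h2
          exact h2 rfl
      · rw [if_neg h2]
  refine ⟨Evec a v, evec_isSymm a v, ?_, ?_, ?_, ?_⟩
  · intro x y
    by_cases hx : x = a
    · simp [Evec, hx, hvnn y]
    · by_cases hy : y = a <;> simp [Evec, hx, hy, hvnn x]
  · intro x y hxy
    rw [hf] at hxy
    by_cases hx : x = a
    · have hy := hxy.mp hx
      simp [Evec, hx, hy, hva]
    · have hy : y ≠ a := fun h => hx (hxy.mpr h)
      simp [Evec, hx, hy]
  · intro j
    rw [evec_hadamard, evec_opNorm a _ (by simp)]
    have hkey : ∑ y, (if y j ≠ a j then v y else 0) ^ 2 = s j ^ 2 := by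
      calc ∑ y, (if y j ≠ a j then v y else 0) ^ 2
          = ∑ y, (if y = flip j then s j ^ 2 else 0) := by
            apply Finset.sum_congr rfl
            intro y _
            rw [hvj j y]
            by_cases h : y = flip j
            · rw [if_pos h, if_pos h]
            · rw [if_neg h, if_neg h]; ring
        _ = s j ^ 2 := by
            rw [Finset.sum_ite_eq' Finset.univ (flip j) (fun _ => s j ^ 2)]
            simp
    rw [hkey, Real.sqrt_sq (hs j)]
  · rw [evec_opNorm a v hva, hsumsq]


lemma adv_main {ι : Type} [Fintype ι] [DecidableEq ι] (a : ι → Bool)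
    (f : (ι → Bool) → Bool)
    (hf : ∀ x y, f x = f y ↔ (x = a ↔ y = a)) (s : ι → ℝ) (hs : ∀ j, 0 ≤ s j) :
    ADVnn s f = Real.sqrt (∑ j, s j ^ 2) ∧ ADVpm s f = Real.sqrt (∑ j, s j ^ 2) := by
  obtain ⟨Γ, h1, h2, h3, h4, h5⟩ := adv_witness a f hf s hs
  constructor
  · apply IsGreatest.csSup_eq
    constructor
    · exact ⟨Γ, h1, h2, h3, h4, h5⟩
    · rintro t ⟨Γ', hsy', hnn', hz', hc', rfl⟩
      exact adv_upper a f hf s Γ' hsy' hz' hc'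
  · apply IsGreatest.csSup_eq
    constructor
    · exact ⟨Γ, h1, h3, h4, h5⟩
    · rintro t ⟨Γ', hsy', hz', hc', rfl⟩
      exact adv_upper a f hf s Γ' hsy' hz' hc'

end

/-- for every `k ≥ 1` and cost vector `s ∈ [0,∞)^k`,
`ADV_s(AND_k) = ADV±_s(AND_k) = √(Σ_j s_j²)` and likewise for `OR_k`. -/
theorem adv_and_or {k : ℕ} (hk : 1 ≤ k) (s : Fin k → ℝ) (hs : ∀ j, 0 ≤ s j) :
    ADVnn s (fun x => decide (∀ j, x j = true)) = Real.sqrt (∑ j, s j ^ 2) ∧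
    ADVpm s (fun x => decide (∀ j, x j = true)) = Real.sqrt (∑ j, s j ^ 2) ∧
    ADVnn s (fun x => decide (∃ j, x j = true)) = Real.sqrt (∑ j, s j ^ 2) ∧
    ADVpm s (fun x => decide (∃ j, x j = true)) = Real.sqrt (∑ j, s j ^ 2) := by
  have hfA : ∀ x y : Fin k → Bool,
      (decide (∀ j, x j = true) = decide (∀ j, y j = true)) ↔
        ((x = fun _ => true) ↔ (y = fun _ => true)) := by
    intro x y
    rw [decide_eq_decide]
    have h : ∀ z : Fin k → Bool, (∀ j, z j = true) ↔ z = fun _ => true := by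
      intro z
      constructor
      · exact fun hh => funext fun j => hh j
      · exact fun hh j => congrFun hh j
    rw [h x, h y]
  have hfO : ∀ x y : Fin k → Bool,
      (decide (∃ j, x j = true) = decide (∃ j, y j = true)) ↔
        ((x = fun _ => false) ↔ (y = fun _ => false)) := by
    intro x y
    rw [decide_eq_decide]
    have h : ∀ z : Fin k → Bool, (z = fun _ => false) ↔ ¬ ∃ j, z j = true := by
      intro z
      constructor
      · rintro rfl ⟨j, hj⟩
        simp at hj
      · intro hh
        push_neg at hh
        exact funext fun j => by
          have := hh j
          simp only [Bool.not_eq_true] at this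
          exact this
    rw [h x, h y]
    exact not_iff_not.symm
  have hAND := adv_main (fun _ => true) (fun x => decide (∀ j, x j = true)) hfA s hs
  have hOR := adv_main (fun _ => false) (fun x => decide (∃ j, x j = true)) hfO s hs
  exact ⟨hAND.1, hAND.2, hOR.1, hOR.2⟩
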